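/- Let n ≥ 2, 0 < λ ≤ Λ < ∞, and α ∈ (0,1). The strict inequality (1/2)·trace{ J_α (A₁ + A₂) } < trace{ [ J_α A₁ J_α A₂ ]^{1/2} } holds for every pair of diagonal matrices A₁, A₂ ∈ 𝒜(λ,Λ) if and only if 1 ≤ Λ/λ < (1 + 2√((1−α)/(n−1)))². -/

import Mathlib

/-!
For diagonal `A₁ = diag a`, `A₂ = diag b` the gap between the two sides splits coordinatewise:
the coordinate where `J_α` carries the negative entry `α - 1` contributes
`(1 - α)(√a₀ + √b₀)² / 2`, every other coordinate `-(√aᵢ - √bᵢ)² / 2`. Over entries in `[λ, Λ]`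
the worst case of `∑_{i ≠ 0} (√aᵢ - √bᵢ)² < (1 - α)(√a₀ + √b₀)²` is
`(n - 1)(√Λ - √λ)² < 4(1 - α)λ`, which is `√(Λ/λ) < 1 + 2√((1 - α)/(n - 1))`.
-/

open MeasureTheory Matrix

noncomputable section

abbrev EucSp (n : ℕ) := EuclideanSpace ℝ (Fin n)

/-- Principal square root of a positive semidefinite matrix (zero otherwise). -/
noncomputable def msqrt {n : ℕ} (A : Matrix (Fin n) (Fin n) ℝ) : Matrix (Fin n) (Fin n) ℝ :=
  open scoped Classical in
  if h : A.PosSemidef then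
    h.1.eigenvectorUnitary.1 * diagonal (Real.sqrt ∘ h.1.eigenvalues) *
      (star h.1.eigenvectorUnitary : Matrix (Fin n) (Fin n) ℝ) else 0

/-- `A ∈ 𝒜(λ,Λ)`: symmetric and uniformly elliptic. -/
def UnifElliptic {n : ℕ} (lam Lam : ℝ) (A : Matrix (Fin n) (Fin n) ℝ) : Prop :=
  A.IsSymm ∧ ∀ ξ : Fin n → ℝ,
    lam * (ξ ⬝ᵥ ξ) ≤ ξ ⬝ᵥ A.mulVec ξ ∧ ξ ⬝ᵥ A.mulVec ξ ≤ Lam * (ξ ⬝ᵥ ξ)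

/-- Membership in the orthogonal group `O(n)`. -/
def IsOrthMat {n : ℕ} (Q : Matrix (Fin n) (Fin n) ℝ) : Prop :=
  Q * Qᵀ = 1 ∧ Qᵀ * Q = 1

/-- Matrix acting on Euclidean space. -/
noncomputable def mvE {n : ℕ} (M : Matrix (Fin n) (Fin n) ℝ) (y : EucSp n) : EucSp n :=
  (EuclideanSpace.equiv (Fin n) ℝ).symm (M.mulVec ((EuclideanSpace.equiv (Fin n) ℝ) y))

/-- The ellipsoid `x + ε A^{1/2} 𝔹`. -/
noncomputable def ellipsoid {n : ℕ} (ε : ℝ) (M : Matrix (Fin n) (Fin n) ℝ) (x : EucSp n) :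
    Set (EucSp n) :=
  (fun y => x + ε • mvE (msqrt M) y) '' Metric.ball (0 : EucSp n) 1

/-- The matrix `J_α = diag(α-1, 1, …, 1)`. -/
noncomputable def Jmat (n : ℕ) (α : ℝ) : Matrix (Fin n) (Fin n) ℝ :=
  Matrix.diagonal (fun i => if (i : ℕ) = 0 then α - 1 else 1)

/-- Reflection in the first coordinate axis. -/
noncomputable def J0 (n : ℕ) : Matrix (Fin n) (Fin n) ℝ :=
  Matrix.diagonal (fun i => if (i : ℕ) = 0 then -1 else 1)

/-- The first standard basis vector `e₁`. -/
noncomputable def e1 (n : ℕ) : EucSp n :=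
  (EuclideanSpace.equiv (Fin n) ℝ).symm (fun i => if (i : ℕ) = 0 then 1 else 0)

/-- `f₁(x,z) = C|x-z|^α + C̃|x+z|²`. -/
noncomputable def f1 {n : ℕ} (α C Ct : ℝ) (x z : EucSp n) : ℝ :=
  C * ‖x - z‖ ^ α + Ct * ‖x + z‖ ^ 2

/-- The annular step function `f₂`. -/
noncomputable def f2 {n : ℕ} (α C lam ε : ℝ) (N : ℕ) (x z : EucSp n) : ℝ :=
  if ‖x - z‖ / (Real.sqrt lam * ε) > (N : ℝ) then 0
  else C ^ (2 * (2 * N - ⌈2 * ‖x - z‖ / (Real.sqrt lam * ε)⌉₊)) * ε ^ α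

open Finset

section Ellipticity

variable {n : ℕ} {lam Lam : ℝ}

lemma UnifElliptic.apply_self_mem_Icc {A : Matrix (Fin n) (Fin n) ℝ}
    (hA : UnifElliptic lam Lam A) (i : Fin n) : A i i ∈ Set.Icc lam Lam := by
  simpa [single_dotProduct, mulVec_single] using hA.2 (Pi.single i 1)

lemma unifElliptic_diagonal_iff {d : Fin n → ℝ} :
    UnifElliptic lam Lam (diagonal d) ↔ ∀ i, d i ∈ Set.Icc lam Lam := by
  refine ⟨fun h i => by simpa using h.apply_self_mem_Icc i,
    fun h => ⟨isSymm_diagonal d, fun ξ => ?_⟩⟩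
  simp only [dotProduct, mulVec_diagonal, Finset.mul_sum]
  constructor <;> refine Finset.sum_le_sum fun i _ => ?_
  · nlinarith [(h i).1, mul_self_nonneg (ξ i)]
  · nlinarith [(h i).2, mul_self_nonneg (ξ i)]

lemma forall_isDiag_unifElliptic_iff
    {P : Matrix (Fin n) (Fin n) ℝ → Matrix (Fin n) (Fin n) ℝ → Prop} :
    (∀ A₁ A₂, UnifElliptic lam Lam A₁ → UnifElliptic lam Lam A₂ → A₁.IsDiag → A₂.IsDiag →
        P A₁ A₂) ↔
      ∀ a b : Fin n → ℝ, (∀ i, a i ∈ Set.Icc lam Lam) → (∀ i, b i ∈ Set.Icc lam Lam) →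
        P (diagonal a) (diagonal b) := by
  refine ⟨fun H a b ha hb => H _ _ (unifElliptic_diagonal_iff.2 ha)
    (unifElliptic_diagonal_iff.2 hb) (isDiag_diagonal a) (isDiag_diagonal b),
    fun H A₁ A₂ h₁ h₂ d₁ d₂ => ?_⟩
  rw [← d₁.diagonal_diag, ← d₂.diagonal_diag]
  exact H _ _ h₁.apply_self_mem_Icc h₂.apply_self_mem_Icc

end Ellipticity

lemma sqrt_mul_mul_mul_eq_abs_mul {j a : ℝ} (b : ℝ) (ha : 0 ≤ a) :
    √(j * a * (j * b)) = |j| * (√a * √b) := by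
  rw [show j * a * (j * b) = |j| ^ 2 * (a * b) by rw [sq_abs]; ring,
    Real.sqrt_mul (sq_nonneg _), Real.sqrt_sq (abs_nonneg _), Real.sqrt_mul ha]

lemma sum_sqrt_sub_half_trace_eq {k : ℕ} {α : ℝ} (hα : α ≤ 1) {a b : Fin (k + 1) → ℝ}
    (ha : ∀ i, 0 ≤ a i) (hb : ∀ i, 0 ≤ b i) :
    ∑ i, √((Jmat (k + 1) α * diagonal a * (Jmat (k + 1) α * diagonal b)) i i) -
        1 / 2 * trace (Jmat (k + 1) α * (diagonal a + diagonal b)) =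
      ((1 - α) * (√(a 0) + √(b 0)) ^ 2 - ∑ i : Fin k, (√(a i.succ) - √(b i.succ)) ^ 2) / 2 := by
  simp only [Jmat, diagonal_mul_diagonal, diagonal_add, trace_diagonal, diagonal_apply_eq,
    Fin.sum_univ_succ, Fin.val_zero, Fin.val_succ, if_true, Nat.succ_ne_zero, if_false]
  simp only [sqrt_mul_mul_mul_eq_abs_mul _ (ha _), abs_one, abs_of_nonpos (by linarith : α - 1 ≤ 0)]
  simp only [sub_sq, add_sq, Real.sq_sqrt (ha _), Real.sq_sqrt (hb _), one_mul,
    Finset.sum_add_distrib, Finset.sum_sub_distrib, mul_assoc, ← Finset.mul_sum]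
  ring

lemma half_trace_lt_sum_sqrt_iff {k : ℕ} {α : ℝ} (hα : α ≤ 1) {a b : Fin (k + 1) → ℝ}
    (ha : ∀ i, 0 ≤ a i) (hb : ∀ i, 0 ≤ b i) :
    1 / 2 * trace (Jmat (k + 1) α * (diagonal a + diagonal b)) <
        ∑ i, √((Jmat (k + 1) α * diagonal a * (Jmat (k + 1) α * diagonal b)) i i) ↔
      ∑ i : Fin k, (√(a i.succ) - √(b i.succ)) ^ 2 < (1 - α) * (√(a 0) + √(b 0)) ^ 2 := by
  rw [← sub_pos, sum_sqrt_sub_half_trace_eq hα ha hb, div_pos_iff_of_pos_right two_pos, sub_pos]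

lemma sq_sqrt_sub_sqrt_le {lam Lam x y : ℝ} (hx : x ∈ Set.Icc lam Lam) (hy : y ∈ Set.Icc lam Lam) :
    (√x - √y) ^ 2 ≤ (√Lam - √lam) ^ 2 := by
  have hx' : √x ∈ Set.Icc √lam √Lam := ⟨Real.sqrt_le_sqrt hx.1, Real.sqrt_le_sqrt hx.2⟩
  have hy' : √y ∈ Set.Icc √lam √Lam := ⟨Real.sqrt_le_sqrt hy.1, Real.sqrt_le_sqrt hy.2⟩
  rw [← sq_abs]
  exact pow_le_pow_left₀ (abs_nonneg _) (Real.dist_le_of_mem_Icc hx' hy') 2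

lemma sq_sqrt_add_sqrt_self {x : ℝ} (hx : 0 ≤ x) : (√x + √x) ^ 2 = 4 * x := by
  rw [← two_mul, mul_pow, Real.sq_sqrt hx]; norm_num

/-- The extremal configuration is `a = (λ, Λ, …, Λ)`, `b = (λ, …, λ)`. -/
lemma forall_sum_sq_sqrt_sub_lt_iff {k : ℕ} {lam Lam β : ℝ} (hlam : 0 ≤ lam) (hlL : lam ≤ Lam)
    (hβ : 0 ≤ β) :
    (∀ a b : Fin (k + 1) → ℝ, (∀ i, a i ∈ Set.Icc lam Lam) → (∀ i, b i ∈ Set.Icc lam Lam) →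
        ∑ i : Fin k, (√(a i.succ) - √(b i.succ)) ^ 2 < β * (√(a 0) + √(b 0)) ^ 2) ↔
      k * (√Lam - √lam) ^ 2 < 4 * β * lam := by
  constructor
  · intro H
    have := H (Fin.cons lam fun _ => Lam) (fun _ => lam)
      (Fin.cases ⟨le_rfl, hlL⟩ fun _ => ⟨hlL, le_rfl⟩) (fun _ => ⟨le_rfl, hlL⟩)
    simp only [Fin.cons_succ, Fin.cons_zero, sum_const, card_univ, Fintype.card_fin,
      nsmul_eq_mul] at this
    rwa [sq_sqrt_add_sqrt_self hlam, ← mul_assoc, mul_comm β] at this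
  · intro h a b ha hb
    calc ∑ i : Fin k, (√(a i.succ) - √(b i.succ)) ^ 2
        ≤ ∑ _i : Fin k, (√Lam - √lam) ^ 2 := sum_le_sum fun i _ => sq_sqrt_sub_sqrt_le (ha _) (hb _)
      _ = k * (√Lam - √lam) ^ 2 := by simp
      _ < 4 * β * lam := h
      _ = β * (√lam + √lam) ^ 2 := by rw [sq_sqrt_add_sqrt_self hlam]; ring
      _ ≤ β * (√(a 0) + √(b 0)) ^ 2 := by gcongr <;> [exact (ha 0).1; exact (hb 0).1]

lemma mul_sq_sqrt_sub_sqrt_lt_iff {m β lam Lam : ℝ} (hm : 0 < m) (hβ : 0 ≤ β) (hlam : 0 < lam)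
    (hlL : lam ≤ Lam) :
    m * (√Lam - √lam) ^ 2 < 4 * β * lam ↔ Lam / lam < (1 + 2 * √(β / m)) ^ 2 := by
  set r := √Lam / √lam
  have hsqrt : 0 < √lam := Real.sqrt_pos.2 hlam
  have hr : 1 ≤ r := (one_le_div hsqrt).2 (Real.sqrt_le_sqrt hlL)
  have hratio : Lam / lam = r ^ 2 := by
    rw [div_pow, Real.sq_sqrt hlam.le, Real.sq_sqrt (hlam.le.trans hlL)]
  have hdiff : √Lam - √lam = √lam * (r - 1) := by rw [mul_sub, mul_one, mul_div_cancel₀ _ hsqrt.ne']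
  have hbound : (2 * √(β / m)) ^ 2 = 4 * β / m := by
    rw [mul_pow, Real.sq_sqrt (div_nonneg hβ hm.le)]; ring
  calc m * (√Lam - √lam) ^ 2 < 4 * β * lam
      ↔ (r - 1) ^ 2 < (2 * √(β / m)) ^ 2 := by
        rw [hdiff, hbound, lt_div_iff₀ hm, mul_pow, Real.sq_sqrt hlam.le,
          show m * (lam * (r - 1) ^ 2) = (r - 1) ^ 2 * m * lam by ring, mul_lt_mul_iff_left₀ hlam]
    _ ↔ r - 1 < 2 * √(β / m) := sq_lt_sq₀ (by linarith) (by positivity)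
    _ ↔ r ^ 2 < (1 + 2 * √(β / m)) ^ 2 := by
        rw [sq_lt_sq₀ (by linarith) (by positivity), sub_lt_iff_lt_add']
    _ ↔ Lam / lam < (1 + 2 * √(β / m)) ^ 2 := by rw [hratio]

/-- the diagonal case (Lemma 6.1): the reverse arithmetic-geometric
trace inequality holds for all diagonal matrices in `𝒜(λ,Λ)` iff the distortion
satisfies the stated bound. -/
theorem stmt13 {n : ℕ} (hn : 2 ≤ n)
    (lam Lam : ℝ) (hlam : 0 < lam) (hlL : lam ≤ Lam)
    (α : ℝ) (hα : α ∈ Set.Ioo (0 : ℝ) 1) :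
    (∀ A1 A2 : Matrix (Fin n) (Fin n) ℝ,
        UnifElliptic lam Lam A1 → UnifElliptic lam Lam A2 →
        A1.IsDiag → A2.IsDiag →
        (1 / 2) * Matrix.trace (Jmat n α * (A1 + A2)) <
          ∑ i, Real.sqrt ((Jmat n α * A1 * (Jmat n α * A2)) i i)) ↔
      (1 ≤ Lam / lam ∧
        Lam / lam < (1 + 2 * Real.sqrt ((1 - α) / ((n : ℝ) - 1))) ^ 2) := by
  obtain ⟨k, rfl⟩ : ∃ k, n = k + 1 := ⟨n - 1, by omega⟩
  have hk : (0 : ℝ) < k := by exact_mod_cast (by omega : 0 < k)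
  have hβ : 0 ≤ 1 - α := by linarith [hα.2]
  have hpos : ∀ {x}, x ∈ Set.Icc lam Lam → 0 ≤ x := fun hx => hlam.le.trans hx.1
  rw [forall_isDiag_unifElliptic_iff, show ((k + 1 : ℕ) : ℝ) - 1 = k by push_cast; ring,
    ← mul_sq_sqrt_sub_sqrt_lt_iff hk hβ hlam hlL, ← forall_sum_sq_sqrt_sub_lt_iff hlam.le hlL hβ]
  simp only [(one_le_div hlam).2 hlL, true_and]
  exact forall₂_congr fun a b => forall₂_congr fun ha hb =>
    half_trace_lt_sum_sqrt_iff hα.2.le (fun i => hpos (ha i)) fun i => hpos (hb i)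

end
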